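/- Let A₀, A₁, B₀, B₁ be self-adjoint operators with A₀² = A₁² = B₀² = B₁² = 1 and [Aₓ,B_y] = 0, α ≥ 1, β real, η = √((4+β²)(1+α²)), Δ = 2(α²−1)√((β²+4)/(α²+1)). Then η·1 − B_{[α,β]} = (α²/(Δ+2η))·{((α²−1)/α²)[(−(ηα/(α²+1))A₀ + B₀+B₁)² + (−βA₀ + (η/(α²+1))·1 − A₁(B₀−B₁))²] + (2A₀ − (η/(2α))(B₀+B₁) + (β/2)S₁)² + (1/α²)(2A₁ − (η/2)(B₀−B₁) + (β/2)S₂)²}, where S₁ = (1/α)A₀(B₀+B₁) − A₁(B₀−B₁) and S₂ = A₀(B₀−B₁) − αA₁(B₀+B₁). -/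

import Mathlib

/-!
Expand the four squares and reduce every word using `A_x² = B_y² = 1` and `[A_x, B_y] = 0`: the
coefficients of all non-scalar words agree on both sides by plain rational-function identities,
and the coefficient of `1` agrees precisely because `η² = (4 + β²)(1 + α²)`. For the prefactor,
`Δ = 2(α² - 1)η / (α² + 1)`, so `α² / (Δ + 2η) = (α² + 1) / (4η)`.
-/

theorem mul_mul_cancel_left_of_mul_eq_one {M : Type*} [Monoid M] {a b : M} (h : a * b = 1)
    (c : M) : a * (b * c) = c := by
  rw [← mul_assoc, h, one_mul]

theorem Real.sqrt_div_eq_sqrt_mul_div (x : ℝ) {y : ℝ} (hy : 0 ≤ y) : √(x / y) = √(x * y) / y := by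
  rw [Real.sqrt_mul' x hy, mul_div_assoc, Real.sqrt_div_self', Real.sqrt_div' x hy, mul_one_div]

section TiltedCHSH

variable {𝕜 R : Type*} [Field 𝕜] [CharZero 𝕜] [Ring R] [Algebra 𝕜 R]

def tiltedCHSH (α β : 𝕜) (A₀ A₁ B₀ B₁ : R) : R :=
  β • A₀ + α • (A₀ * B₀) + α • (A₀ * B₁) + A₁ * B₀ - A₁ * B₁

variable {A₀ A₁ B₀ B₁ : R}

theorem smul_one_sub_tiltedCHSH_eq_sos
    (hA₀ : A₀ * A₀ = 1) (hA₁ : A₁ * A₁ = 1) (hB₀ : B₀ * B₀ = 1) (hB₁ : B₁ * B₁ = 1)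
    (h₀₀ : Commute A₀ B₀) (h₀₁ : Commute A₀ B₁) (h₁₀ : Commute A₁ B₀) (h₁₁ : Commute A₁ B₁)
    {α β η : 𝕜} (hα : α ≠ 0) (hα₁ : α ^ 2 + 1 ≠ 0) (hη : η ≠ 0)
    (hη₂ : η ^ 2 = (4 + β ^ 2) * (1 + α ^ 2)) :
    η • (1 : R) - tiltedCHSH α β A₀ A₁ B₀ B₁ =
      ((α ^ 2 + 1) / (4 * η)) •
        (((α ^ 2 - 1) / α ^ 2) •
            ((-(η * α / (α ^ 2 + 1)) • A₀ + B₀ + B₁) ^ 2 +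
              ((-β) • A₀ + (η / (α ^ 2 + 1)) • (1 : R) - A₁ * (B₀ - B₁)) ^ 2) +
          ((2 : 𝕜) • A₀ - (η / (2 * α)) • (B₀ + B₁) +
            (β / 2) • (α⁻¹ • (A₀ * (B₀ + B₁)) - A₁ * (B₀ - B₁))) ^ 2 +
          (α ^ 2)⁻¹ • ((2 : 𝕜) • A₁ - (η / 2) • (B₀ - B₁) +
            (β / 2) • (A₀ * (B₀ - B₁) - α • (A₁ * (B₀ + B₁)))) ^ 2) := by
  simp only [tiltedCHSH, pow_two, mul_add, add_mul, mul_sub, sub_mul, smul_mul_assoc,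
    mul_smul_comm, smul_smul, smul_add, smul_sub, mul_one, one_mul, mul_assoc,
    h₀₀.eq.symm, h₀₁.eq.symm, h₁₀.eq.symm, h₁₁.eq.symm, h₀₀.symm.left_comm, h₀₁.symm.left_comm,
    h₁₀.symm.left_comm, h₁₁.symm.left_comm, hA₀, hA₁, hB₀, hB₁,
    mul_mul_cancel_left_of_mul_eq_one hA₀, mul_mul_cancel_left_of_mul_eq_one hA₁]
  match_scalars
  · field_simp
    linear_combination (8 * α ^ 2 * (1 + α ^ 2)) * hη₂
  all_goals field_simp; ring

end TiltedCHSH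

theorem stmt_6_general {H : Type*} [NormedAddCommGroup H] [InnerProductSpace ℂ H]
    (A₀ A₁ B₀ B₁ : H →L[ℂ] H)
    (hA₀2 : A₀ * A₀ = 1) (hA₁2 : A₁ * A₁ = 1) (hB₀2 : B₀ * B₀ = 1) (hB₁2 : B₁ * B₁ = 1)
    (hc00 : A₀ * B₀ = B₀ * A₀) (hc01 : A₀ * B₁ = B₁ * A₀)
    (hc10 : A₁ * B₀ = B₀ * A₁) (hc11 : A₁ * B₁ = B₁ * A₁)
    (α β η Δ : ℝ) (hα : 1 ≤ α)
    (hη : η = Real.sqrt ((4 + β ^ 2) * (1 + α ^ 2)))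
    (hΔ : Δ = 2 * (α ^ 2 - 1) * Real.sqrt ((β ^ 2 + 4) / (α ^ 2 + 1)))
    (B S₁ S₂ : H →L[ℂ] H)
    (hB : B = (β : ℂ) • A₀ + (α : ℂ) • (A₀ * B₀) + (α : ℂ) • (A₀ * B₁) + A₁ * B₀ - A₁ * B₁)
    (hS₁ : S₁ = (α⁻¹ : ℂ) • (A₀ * (B₀ + B₁)) - A₁ * (B₀ - B₁))
    (hS₂ : S₂ = A₀ * (B₀ - B₁) - (α : ℂ) • (A₁ * (B₀ + B₁))) :
    (η : ℂ) • (1 : H →L[ℂ] H) - B =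
      ((α ^ 2 / (Δ + 2 * η) : ℝ) : ℂ) •
        (((α ^ 2 - 1) / α ^ 2 : ℝ) •
            (((-(η * α / (α ^ 2 + 1) : ℝ) : ℂ) • A₀ + B₀ + B₁) ^ 2 +
              (((-β : ℝ) : ℂ) • A₀ + ((η / (α ^ 2 + 1) : ℝ) : ℂ) • (1 : H →L[ℂ] H) -
                A₁ * (B₀ - B₁)) ^ 2) +
          ((2 : ℂ) • A₀ - ((η / (2 * α) : ℝ) : ℂ) • (B₀ + B₁) +
            ((β / 2 : ℝ) : ℂ) • S₁) ^ 2 +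
          ((α ^ 2 : ℝ)⁻¹ : ℂ) • ((2 : ℂ) • A₁ - ((η / 2 : ℝ) : ℂ) • (B₀ - B₁) +
            ((β / 2 : ℝ) : ℂ) • S₂) ^ 2) := by
  subst hB hS₁ hS₂
  have hα₀ : α ≠ 0 := (zero_lt_one.trans_le hα).ne'
  have hη₀ : 0 < η := hη ▸ Real.sqrt_pos.2 (by positivity)
  have hη₂ : η ^ 2 = (4 + β ^ 2) * (1 + α ^ 2) := hη ▸ Real.sq_sqrt (by positivity)
  have hΔη : Δ = 2 * (α ^ 2 - 1) * η / (α ^ 2 + 1) := by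
    rw [hΔ, hη, Real.sqrt_div_eq_sqrt_mul_div _ (by positivity), add_comm (β ^ 2),
      add_comm (α ^ 2)]
    ring
  have hcoef : α ^ 2 / (Δ + 2 * η) = (α ^ 2 + 1) / (4 * η) := by
    rw [hΔη]
    field_simp
    ring
  rw [hcoef, ← Complex.coe_smul]
  push_cast
  exact smul_one_sub_tiltedCHSH_eq_sos hA₀2 hA₁2 hB₀2 hB₁2 hc00 hc01 hc10 hc11
    (by exact_mod_cast hα₀) (by exact_mod_cast (by positivity : α ^ 2 + 1 ≠ 0))
    (by exact_mod_cast hη₀.ne') (by exact_mod_cast hη₂)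

theorem stmt_6 {H : Type*} [NormedAddCommGroup H] [InnerProductSpace ℂ H] [CompleteSpace H]
    (A₀ A₁ B₀ B₁ : H →L[ℂ] H)
    (hA₀ : IsSelfAdjoint A₀) (hA₁ : IsSelfAdjoint A₁)
    (hB₀ : IsSelfAdjoint B₀) (hB₁ : IsSelfAdjoint B₁)
    (hA₀2 : A₀ * A₀ = 1) (hA₁2 : A₁ * A₁ = 1) (hB₀2 : B₀ * B₀ = 1) (hB₁2 : B₁ * B₁ = 1)
    (hc00 : A₀ * B₀ = B₀ * A₀) (hc01 : A₀ * B₁ = B₁ * A₀)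
    (hc10 : A₁ * B₀ = B₀ * A₁) (hc11 : A₁ * B₁ = B₁ * A₁)
    (α β η Δ : ℝ) (hα : 1 ≤ α)
    (hη : η = Real.sqrt ((4 + β ^ 2) * (1 + α ^ 2)))
    (hΔ : Δ = 2 * (α ^ 2 - 1) * Real.sqrt ((β ^ 2 + 4) / (α ^ 2 + 1)))
    (B S₁ S₂ : H →L[ℂ] H)
    (hB : B = (β : ℂ) • A₀ + (α : ℂ) • (A₀ * B₀) + (α : ℂ) • (A₀ * B₁) + A₁ * B₀ - A₁ * B₁)
    (hS₁ : S₁ = (α⁻¹ : ℂ) • (A₀ * (B₀ + B₁)) - A₁ * (B₀ - B₁))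
    (hS₂ : S₂ = A₀ * (B₀ - B₁) - (α : ℂ) • (A₁ * (B₀ + B₁))) :
    (η : ℂ) • (1 : H →L[ℂ] H) - B =
      ((α ^ 2 / (Δ + 2 * η) : ℝ) : ℂ) •
        (((α ^ 2 - 1) / α ^ 2 : ℝ) •
            (((-(η * α / (α ^ 2 + 1) : ℝ) : ℂ) • A₀ + B₀ + B₁) ^ 2 +
              (((-β : ℝ) : ℂ) • A₀ + ((η / (α ^ 2 + 1) : ℝ) : ℂ) • (1 : H →L[ℂ] H) -
                A₁ * (B₀ - B₁)) ^ 2) +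
          ((2 : ℂ) • A₀ - ((η / (2 * α) : ℝ) : ℂ) • (B₀ + B₁) +
            ((β / 2 : ℝ) : ℂ) • S₁) ^ 2 +
          ((α ^ 2 : ℝ)⁻¹ : ℂ) • ((2 : ℂ) • A₁ - ((η / 2 : ℝ) : ℂ) • (B₀ - B₁) +
            ((β / 2 : ℝ) : ℂ) • S₂) ^ 2) :=
  stmt_6_general A₀ A₁ B₀ B₁ hA₀2 hA₁2 hB₀2 hB₁2 hc00 hc01 hc10 hc11 α β η Δ hα hη hΔ B S₁ S₂ hB hS₁
    hS₂
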